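/- arXiv:1605.03044 — 4 statements merged into one kernel-verified Lean document; each statement's English description precedes it below -/
import Mathlib

section
/- Let γ ∈ Ω with γ ≠ 0. If D is a derivation of SV = SV[Γ,s] of degree γ satisfying D(L_{0,0}) = 0, then D = 0. -/
noncomputable section

namespace SVSuper

variable (Γ : AddSubgroup ℂ) (s : ℂ)

/-- Basis index type of `SV[Γ,s]`: `Sum.inl (α, i)` stands for `L_{α,i}` (`α ∈ Γ`),
`Sum.inr (μ, j)` stands for `G_{μ,j}` (`μ ∈ s + Γ`). -/
abbrev Idx : Type := (Γ × ℕ) ⊕ ({μ : ℂ // μ - s ∈ Γ} × ℕ)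

/-- The underlying vector space of `SV[Γ,s]`: the free `ℂ`-module on `Idx`. -/
abbrev SV : Type := Idx Γ s →₀ ℂ

/-- The basis vector `L_{α,i}`. -/
def lgen (α : ℂ) (hα : α ∈ Γ) (i : ℕ) : SV Γ s :=
  Finsupp.single (Sum.inl (⟨α, hα⟩, i)) 1

/-- The basis vector `G_{μ,j}`. -/
def ggen (μ : ℂ) (hμ : μ - s ∈ Γ) (j : ℕ) : SV Γ s :=
  Finsupp.single (Sum.inr (⟨μ, hμ⟩, j)) 1

theorem memLG {α μ : ℂ} (hα : α ∈ Γ) (hμ : μ - s ∈ Γ) : α + μ - s ∈ Γ := by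
  have h : α + μ - s = α + (μ - s) := by ring
  rw [h]; exact add_mem hα hμ

theorem memGG (hs : 2 * s ∈ Γ) {μ ν : ℂ} (hμ : μ - s ∈ Γ) (hν : ν - s ∈ Γ) :
    μ + ν ∈ Γ := by
  have h : μ + ν = (μ - s) + (ν - s) + 2 * s := by ring
  rw [h]; exact add_mem (add_mem hμ hν) hs

/-- The bracket on basis vectors (any symbol with second index `-1` is interpreted as `0`;
here this is automatic since the corresponding coefficient vanishes when `i = j = 0`). -/
def bk (hs : 2 * s ∈ Γ) : Idx Γ s → Idx Γ s → SV Γ s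
  | Sum.inl (⟨α, hα⟩, i), Sum.inl (⟨β, hβ⟩, j) =>
      (β - α) • lgen Γ s (α + β) (add_mem hα hβ) (i + j)
        + ((j : ℂ) - (i : ℂ)) • lgen Γ s (α + β) (add_mem hα hβ) (i + j - 1)
  | Sum.inl (⟨α, hα⟩, i), Sum.inr (⟨μ, hμ⟩, j) =>
      (μ - α / 2) • ggen Γ s (α + μ) (memLG Γ s hα hμ) (i + j)
        + ((j : ℂ) - (i : ℂ) / 2) • ggen Γ s (α + μ) (memLG Γ s hα hμ) (i + j - 1)
  | Sum.inr (⟨μ, hμ⟩, i), Sum.inl (⟨α, hα⟩, j) =>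
      -((μ - α / 2) • ggen Γ s (α + μ) (memLG Γ s hα hμ) (j + i)
        + ((i : ℂ) - (j : ℂ) / 2) • ggen Γ s (α + μ) (memLG Γ s hα hμ) (j + i - 1))
  | Sum.inr (⟨μ, hμ⟩, i), Sum.inr (⟨ν, hν⟩, j) =>
      (2 : ℂ) • lgen Γ s (μ + ν) (memGG Γ s hs hμ hν) (i + j)

/-- The bilinear bracket of `SV[Γ,s]`. -/
def bkt (hs : 2 * s ∈ Γ) (x y : SV Γ s) : SV Γ s :=
  x.sum fun a ca => y.sum fun b cb => (ca * cb) • bk Γ s hs a b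

/-- `x` lies in the even part `SV_0̄` (the span of the `L_{α,i}`). -/
def IsEvenElt (x : SV Γ s) : Prop := ∀ b, x (Sum.inr b) = 0

/-- `x` lies in the odd part `SV_1̄` (the span of the `G_{μ,j}`). -/
def IsOddElt (x : SV Γ s) : Prop := ∀ a, x (Sum.inl a) = 0

/-- `x` is `ℤ₂`-homogeneous. -/
def IsHomog (x : SV Γ s) : Prop := IsEvenElt Γ s x ∨ IsOddElt Γ s x

/-- `x` lies in the degree-`γ` component `SV_γ = span{L_{γ,i}, G_{γ,i}}` of the `Ω`-grading. -/
def InDeg (γ : ℂ) (x : SV Γ s) : Prop :=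
  (∀ p : Γ × ℕ, (p.1 : ℂ) ≠ γ → x (Sum.inl p) = 0) ∧
  (∀ q : {μ : ℂ // μ - s ∈ Γ} × ℕ, (q.1 : ℂ) ≠ γ → x (Sum.inr q) = 0)

/-- The group `Ω`, generated by `Γ ∪ {s}`. -/
def Omega : AddSubgroup ℂ := Γ ⊔ AddSubgroup.closure {s}

theorem gamma_mem_Omega {α : ℂ} (hα : α ∈ Γ) : α ∈ Omega Γ s :=
  AddSubgroup.mem_sup_left hα

theorem s_mem_Omega : s ∈ Omega Γ s :=
  AddSubgroup.mem_sup_right (AddSubgroup.subset_closure (Set.mem_singleton s))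

theorem smu_mem_Omega {μ : ℂ} (hμ : μ - s ∈ Γ) : μ ∈ Omega Γ s := by
  have h := add_mem (gamma_mem_Omega Γ s hμ) (s_mem_Omega Γ s)
  rwa [sub_add_cancel] at h

/-- The `Ω`-degree of a basis index. -/
def idxDeg : Idx Γ s → ℂ
  | Sum.inl p => (p.1 : ℂ)
  | Sum.inr q => (q.1 : ℂ)

theorem idxDeg_mem (a : Idx Γ s) : idxDeg Γ s a ∈ Omega Γ s := by
  cases a with
  | inl p => exact gamma_mem_Omega Γ s p.1.2
  | inr q => exact smu_mem_Omega Γ s q.1.2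

/-- The derivation `D_φ` attached to a group homomorphism `φ : (Ω,+) → (ℂ,+)`:
`D_φ (L_{α,i}) = φ(α) • L_{α,i}` and `D_φ (G_{μ,j}) = φ(μ) • G_{μ,j}`. -/
def Dphi (φ : ↥(Omega Γ s) →+ ℂ) : SV Γ s →ₗ[ℂ] SV Γ s :=
  Finsupp.lsum ℂ fun a => φ ⟨idxDeg Γ s a, idxDeg_mem Γ s a⟩ • Finsupp.lsingle a

/-- `D` is a parity-`0` (even) derivation of `SV[Γ,s]`. -/
def IsEvenDer (hs : 2 * s ∈ Γ) (D : SV Γ s →ₗ[ℂ] SV Γ s) : Prop :=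
  (∀ x, IsEvenElt Γ s x → IsEvenElt Γ s (D x)) ∧
  (∀ x, IsOddElt Γ s x → IsOddElt Γ s (D x)) ∧
  (∀ x y, IsHomog Γ s x →
    D (bkt Γ s hs x y) = bkt Γ s hs (D x) y + bkt Γ s hs x (D y))

/-- `D` is a parity-`1` (odd) derivation of `SV[Γ,s]`. -/
def IsOddDer (hs : 2 * s ∈ Γ) (D : SV Γ s →ₗ[ℂ] SV Γ s) : Prop :=
  (∀ x, IsEvenElt Γ s x → IsOddElt Γ s (D x)) ∧
  (∀ x, IsOddElt Γ s x → IsEvenElt Γ s (D x)) ∧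
  (∀ x y, IsEvenElt Γ s x →
    D (bkt Γ s hs x y) = bkt Γ s hs (D x) y + bkt Γ s hs x (D y)) ∧
  (∀ x y, IsOddElt Γ s x →
    D (bkt Γ s hs x y) = bkt Γ s hs (D x) y - bkt Γ s hs x (D y))

/-- `D` is a derivation of `SV[Γ,s]`: a sum of an even and an odd derivation. -/
def IsDer (hs : 2 * s ∈ Γ) (D : SV Γ s →ₗ[ℂ] SV Γ s) : Prop :=
  ∃ D0 D1, IsEvenDer Γ s hs D0 ∧ IsOddDer Γ s hs D1 ∧ D = D0 + D1

/-- `D` has degree `γ`: it maps `SV_δ` into `SV_{δ+γ}` for every `δ`. -/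
def HasDeg (γ : ℂ) (D : SV Γ s →ₗ[ℂ] SV Γ s) : Prop :=
  ∀ (δ : ℂ) (x : SV Γ s), InDeg Γ s δ x → InDeg Γ s (δ + γ) (D x)

/-- `ψ` is a 2-cocycle on `SV[Γ,s]` (super skew-symmetry and super Jacobi identity,
with the sign `(-1)^{|x||y|}` spelled out according to the parities). -/
def IsCocycle (hs : 2 * s ∈ Γ) (ψ : SV Γ s →ₗ[ℂ] SV Γ s →ₗ[ℂ] ℂ) : Prop :=
  (∀ x y, IsHomog Γ s x → IsHomog Γ s y → (IsEvenElt Γ s x ∨ IsEvenElt Γ s y) →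
    ψ x y = - ψ y x) ∧
  (∀ x y, IsOddElt Γ s x → IsOddElt Γ s y → ψ x y = ψ y x) ∧
  (∀ x y z, IsHomog Γ s x → IsHomog Γ s y → (IsEvenElt Γ s x ∨ IsEvenElt Γ s y) →
    ψ x (bkt Γ s hs y z) = ψ (bkt Γ s hs x y) z + ψ y (bkt Γ s hs x z)) ∧
  (∀ x y z, IsOddElt Γ s x → IsOddElt Γ s y →
    ψ x (bkt Γ s hs y z) = ψ (bkt Γ s hs x y) z - ψ y (bkt Γ s hs x z))

/-- `f : SV → ℂ` satisfies the recursive formulas associated to the 2-cocycle `ψ`. -/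
def IsAssocMap (hs : 2 * s ∈ Γ) (ψ : SV Γ s →ₗ[ℂ] SV Γ s →ₗ[ℂ] ℂ)
    (f : SV Γ s →ₗ[ℂ] ℂ) : Prop :=
  (∀ i : ℕ, f (lgen Γ s 0 (zero_mem Γ) i)
      = ψ (lgen Γ s 0 (zero_mem Γ) 0) (lgen Γ s 0 (zero_mem Γ) (i + 1)) / (i + 1)) ∧
  (∀ (α : ℂ) (hα : α ∈ Γ) (i : ℕ), α ≠ 0 →
    f (lgen Γ s α hα i)
      = (ψ (lgen Γ s 0 (zero_mem Γ) 0) (lgen Γ s α hα i) - (i : ℂ) * f (lgen Γ s α hα (i - 1))) / α) ∧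
  (∀ (h0 : (0 : ℂ) - s ∈ Γ) (i : ℕ),
    f (ggen Γ s 0 h0 i) = (2 / (2 * (i : ℂ) - 1)) * ψ (lgen Γ s 0 (zero_mem Γ) 1) (ggen Γ s 0 h0 i)) ∧
  (∀ (μ : ℂ) (hμ : μ - s ∈ Γ) (i : ℕ), μ ≠ 0 →
    f (ggen Γ s μ hμ i)
      = (ψ (lgen Γ s 0 (zero_mem Γ) 0) (ggen Γ s μ hμ i) - (i : ℂ) * f (ggen Γ s μ hμ (i - 1))) / μ)

/-! `ad L_{0,0}` sends a basis vector `e` of degree `δ` and height `i` to `δ e` plus `i` times the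
basis vector of height `i - 1`, and a derivation `D` with `D L_{0,0} = 0` commutes with `ad L_{0,0}`.
By induction on the height, `D e` is then a vector `y` of degree `δ + γ` with
`δ y = [L_{0,0}, y] = (δ + γ) y + (terms one step lower)`, so the coefficient of `y` of maximal
height is killed by `γ ≠ 0`; hence `y = 0`. -/

local notation "L₀₀" => lgen Γ s 0 (zero_mem Γ) 0

def idxHeight : Idx Γ s → ℕ
  | Sum.inl p => p.2
  | Sum.inr q => q.2

def idxPred : Idx Γ s → Idx Γ s
  | Sum.inl (x, j) => Sum.inl (x, j - 1)
  | Sum.inr (x, j) => Sum.inr (x, j - 1)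

def idxSucc : Idx Γ s → Idx Γ s
  | Sum.inl (x, j) => Sum.inl (x, j + 1)
  | Sum.inr (x, j) => Sum.inr (x, j + 1)

variable {Γ s}

lemma idxHeight_idxSucc (b : Idx Γ s) : idxHeight Γ s (idxSucc Γ s b) = idxHeight Γ s b + 1 := by
  rcases b with ⟨x, j⟩ | ⟨x, j⟩ <;> rfl

lemma idxHeight_idxPred (b : Idx Γ s) : idxHeight Γ s (idxPred Γ s b) = idxHeight Γ s b - 1 := by
  rcases b with ⟨x, j⟩ | ⟨x, j⟩ <;> rfl

lemma idxPred_idxSucc (b : Idx Γ s) : idxPred Γ s (idxSucc Γ s b) = b := by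
  rcases b with ⟨x, j⟩ | ⟨x, j⟩ <;> rfl

lemma idxSucc_idxPred {b : Idx Γ s} (h : idxHeight Γ s b ≠ 0) :
    idxSucc Γ s (idxPred Γ s b) = b := by
  rcases b with ⟨x, j⟩ | ⟨x, j⟩ <;> simp only [idxHeight] at h <;>
    simp only [idxPred, idxSucc, Nat.sub_add_cancel (Nat.one_le_iff_ne_zero.2 h)]

lemma InDeg.apply_eq_zero {δ : ℂ} {y : SV Γ s} (hy : InDeg Γ s δ y) {b : Idx Γ s}
    (hb : idxDeg Γ s b ≠ δ) : y b = 0 := by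
  rcases b with p | q
  · exact hy.1 p hb
  · exact hy.2 q hb

lemma inDeg_single (a : Idx Γ s) (c : ℂ) : InDeg Γ s (idxDeg Γ s a) (Finsupp.single a c) :=
  ⟨fun p hp => Finsupp.single_eq_of_ne fun h => hp (by rw [← h]; rfl),
    fun q hq => Finsupp.single_eq_of_ne fun h => hq (by rw [← h]; rfl)⟩

lemma isEvenElt_lgen {α : ℂ} (hα : α ∈ Γ) (i : ℕ) : IsEvenElt Γ s (lgen Γ s α hα i) :=
  fun _ => Finsupp.single_eq_of_ne Sum.inr_ne_inl

lemma eq_zero_of_apply_idxSucc {y : SV Γ s}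
    (h : ∀ b, y (idxSucc Γ s b) = 0 → y b = 0) : y = 0 := by
  by_contra hy
  obtain ⟨b, hb, hmax⟩ :=
    y.support.exists_max_image (idxHeight Γ s) (Finsupp.support_nonempty_iff.2 hy)
  have hsucc : y (idxSucc Γ s b) = 0 := by
    by_contra hne
    have := hmax _ (Finsupp.mem_support_iff.2 hne)
    rw [idxHeight_idxSucc] at this
    omega
  exact Finsupp.mem_support_iff.1 hb (h b hsucc)

section Bracket

variable (hs : 2 * s ∈ Γ)

lemma bkt_single_single (a b : Idx Γ s) (ca cb : ℂ) :
    bkt Γ s hs (Finsupp.single a ca) (Finsupp.single b cb) = (ca * cb) • bk Γ s hs a b := by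
  unfold bkt
  rw [Finsupp.sum_single_index (by simp), Finsupp.sum_single_index (by simp)]

lemma bkt_zero_left (y : SV Γ s) : bkt Γ s hs 0 y = 0 :=
  Finsupp.sum_zero_index

lemma bkt_zero_right (x : SV Γ s) : bkt Γ s hs x 0 = 0 := by
  simp [bkt]

lemma bkt_add_left (x x' y : SV Γ s) :
    bkt Γ s hs (x + x') y = bkt Γ s hs x y + bkt Γ s hs x' y := by
  refine Finsupp.sum_add_index' (by simp) fun a c₁ c₂ => ?_
  rw [← Finsupp.sum_add]
  simp only [add_mul, add_smul]

lemma bkt_add_right (x y y' : SV Γ s) :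
    bkt Γ s hs x (y + y') = bkt Γ s hs x y + bkt Γ s hs x y' := by
  unfold bkt
  rw [← Finsupp.sum_add]
  congr 1
  funext a ca
  exact Finsupp.sum_add_index' (by simp) fun b c₁ c₂ => by rw [mul_add, add_smul]

lemma bkt_L₀₀_single (a : Idx Γ s) (c : ℂ) :
    bkt Γ s hs L₀₀ (Finsupp.single a c)
      = idxDeg Γ s a • Finsupp.single a c
        + (idxHeight Γ s a : ℂ) • Finsupp.single (idxPred Γ s a) c := by
  have hbk : bk Γ s hs (Sum.inl (⟨0, zero_mem Γ⟩, 0)) a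
      = idxDeg Γ s a • Finsupp.single a 1
        + (idxHeight Γ s a : ℂ) • Finsupp.single (idxPred Γ s a) 1 := by
    rcases a with ⟨⟨β, hβ⟩, j⟩ | ⟨⟨μ, hμ⟩, j⟩ <;>
      simp [bk, lgen, ggen, idxDeg, idxHeight, idxPred]
  rw [lgen, bkt_single_single, one_mul, hbk,
    ← Finsupp.smul_single_one a c, ← Finsupp.smul_single_one (idxPred Γ s a) c]
  module

lemma height_smul_single_idxPred_apply (a b : Idx Γ s) (c : ℂ) :
    ((idxHeight Γ s a : ℂ) • Finsupp.single (idxPred Γ s a) c) b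
      = ((idxHeight Γ s b : ℂ) + 1) * Finsupp.single a c (idxSucc Γ s b) := by
  rw [Finsupp.smul_apply, smul_eq_mul]
  by_cases hab : a = idxSucc Γ s b
  · subst hab
    rw [idxPred_idxSucc, idxHeight_idxSucc, Finsupp.single_eq_same, Finsupp.single_eq_same]
    push_cast
    ring
  rw [Finsupp.single_eq_of_ne' hab, mul_zero]
  by_cases ha : idxHeight Γ s a = 0
  · rw [ha, Nat.cast_zero, zero_mul]
  · rw [Finsupp.single_eq_of_ne' fun hp => hab (by rw [← idxSucc_idxPred ha, hp]), mul_zero]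

lemma bkt_L₀₀_apply (y : SV Γ s) (b : Idx Γ s) :
    bkt Γ s hs L₀₀ y b
      = idxDeg Γ s b * y b + ((idxHeight Γ s b : ℂ) + 1) * y (idxSucc Γ s b) := by
  induction y using Finsupp.induction_linear with
  | zero => simp [bkt_zero_right]
  | add f g hf hg =>
    rw [bkt_add_right, Finsupp.add_apply, hf, hg, Finsupp.add_apply, Finsupp.add_apply]
    ring
  | single a c =>
    rw [bkt_L₀₀_single, Finsupp.add_apply, height_smul_single_idxPred_apply,
      Finsupp.smul_apply, smul_eq_mul]
    by_cases hab : a = b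
    · rw [hab]
    · rw [Finsupp.single_eq_of_ne' hab, mul_zero, mul_zero]

-- Both parity components obey the unsigned Leibniz rule against the even `L_{0,0}`.
lemma IsDer.map_bkt_L₀₀ {D : SV Γ s →ₗ[ℂ] SV Γ s} (hD : IsDer Γ s hs D) (hDL : D L₀₀ = 0)
    (y : SV Γ s) : D (bkt Γ s hs L₀₀ y) = bkt Γ s hs L₀₀ (D y) := by
  obtain ⟨D₀, D₁, h₀, h₁, rfl⟩ := hD
  have hsum : bkt Γ s hs (D₀ L₀₀) y + bkt Γ s hs (D₁ L₀₀) y = 0 := by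
    rw [← bkt_add_left, ← LinearMap.add_apply, hDL, bkt_zero_left]
  rw [LinearMap.add_apply, LinearMap.add_apply, h₀.2.2 _ y (Or.inl (isEvenElt_lgen _ 0)),
    h₁.2.2.1 _ y (isEvenElt_lgen _ 0), bkt_add_right]
  linear_combination (norm := module) hsum

end Bracket

section Vanishing

variable {hs : 2 * s ∈ Γ} {γ : ℂ} {D : SV Γ s →ₗ[ℂ] SV Γ s}

lemma map_single_eq_zero_of_map_single_idxPred (hγ : γ ≠ 0) (hD : IsDer Γ s hs D)
    (hdeg : HasDeg Γ s γ D) (hDL : D L₀₀ = 0) (a : Idx Γ s) (c : ℂ)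
    (hpred : (idxHeight Γ s a : ℂ) • D (Finsupp.single (idxPred Γ s a) c) = 0) :
    D (Finsupp.single a c) = 0 := by
  set y := D (Finsupp.single a c)
  have hy : InDeg Γ s (idxDeg Γ s a + γ) y := hdeg _ _ (inDeg_single a c)
  have hcomm : idxDeg Γ s a • y = bkt Γ s hs L₀₀ y := by
    rw [← hD.map_bkt_L₀₀ hs hDL, bkt_L₀₀_single, map_add, map_smul, map_smul, hpred, add_zero]
  refine eq_zero_of_apply_idxSucc fun b hb => ?_
  by_cases hdegb : idxDeg Γ s b = idxDeg Γ s a + γ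
  · have hcomm_b := DFunLike.congr_fun hcomm b
    rw [Finsupp.smul_apply, smul_eq_mul, bkt_L₀₀_apply, hb, hdegb] at hcomm_b
    have : γ * y b = 0 := by linear_combination -hcomm_b
    exact (mul_eq_zero.1 this).resolve_left hγ
  · exact hy.apply_eq_zero hdegb

lemma map_single_eq_zero (hγ : γ ≠ 0) (hD : IsDer Γ s hs D) (hdeg : HasDeg Γ s γ D)
    (hDL : D L₀₀ = 0) (a : Idx Γ s) (c : ℂ) : D (Finsupp.single a c) = 0 := by
  induction hn : idxHeight Γ s a generalizing a c with
  | zero => exact map_single_eq_zero_of_map_single_idxPred hγ hD hdeg hDL a c (by simp [hn])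
  | succ n ih =>
    refine map_single_eq_zero_of_map_single_idxPred hγ hD hdeg hDL a c ?_
    rw [ih _ c (by rw [idxHeight_idxPred, hn, Nat.add_sub_cancel]), smul_zero]

end Vanishing

theorem derivation_nonzero_degree_vanishes_general (Γ : AddSubgroup ℂ)
    (s : ℂ) (hs : 2 * s ∈ Γ) :
    ∀ γ : ℂ, γ ∈ Omega Γ s → γ ≠ 0 →
      ∀ D : SV Γ s →ₗ[ℂ] SV Γ s, IsDer Γ s hs D → HasDeg Γ s γ D →
        D (lgen Γ s 0 (zero_mem Γ) 0) = 0 → D = 0 := by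
  intro γ _ hγ D hD hdeg hDL
  exact Finsupp.lhom_ext fun a c => map_single_eq_zero hγ hD hdeg hDL a c

/-- A derivation of `SV[Γ,s]` of nonzero degree `γ ∈ Ω` killing `L_{0,0}` is zero. -/
theorem derivation_nonzero_degree_vanishes (Γ : AddSubgroup ℂ) (hΓ : ∀ n : ℤ, (n : ℂ) ∈ Γ)
    (s : ℂ) (hs : 2 * s ∈ Γ) :
    ∀ γ : ℂ, γ ∈ Omega Γ s → γ ≠ 0 →
      ∀ D : SV Γ s →ₗ[ℂ] SV Γ s, IsDer Γ s hs D → HasDeg Γ s γ D →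
        D (lgen Γ s 0 (zero_mem Γ) 0) = 0 → D = 0 :=
  derivation_nonzero_degree_vanishes_general Γ s hs

end SVSuper
end
end

section
/- If z belongs to the odd part SV_1̄ of SV = SV[Γ,s] and [z,z] = 0, then z = 0. -/
noncomputable section

namespace SVSuper

variable (Γ : AddSubgroup ℂ) (s : ℂ)

/-! Order the odd basis indices `(μ, j)` lexicographically by `(Re μ, Im μ, j)`; this order is
compatible with addition. If `z ≠ 0` is odd and `G_{μ₀,j₀}` is its largest component, the only pair
of components of `z` whose bracket meets `L_{2μ₀,2j₀}` is `(G_{μ₀,j₀}, G_{μ₀,j₀})`, so the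
coefficient of `L_{2μ₀,2j₀}` in `[z,z]` is `2 z_{μ₀,j₀}² ≠ 0`. -/

theorem _root_.Finset.exists_mem_forall_add_eq_add_self {ι M : Type*} [AddCommMonoid M]
    [LinearOrder M] [IsOrderedCancelAddMonoid M] {S : Finset ι} (hS : S.Nonempty)
    {κ : ι → M} (hκ : Set.InjOn κ S) :
    ∃ a₀ ∈ S, ∀ a ∈ S, ∀ b ∈ S, κ a + κ b = κ a₀ + κ a₀ → a = a₀ ∧ b = a₀ := by
  obtain ⟨a₀, ha₀, hmax⟩ := S.exists_max_image κ hS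
  refine ⟨a₀, ha₀, fun a ha b hb h => ?_⟩
  obtain ⟨ha', hb'⟩ := (add_eq_add_iff_eq_and_eq (hmax a ha) (hmax b hb)).1 h
  exact ⟨hκ ha ha₀ ha', hκ hb ha₀ hb'⟩

def lexKey : ℂ × ℕ →+ ℝ ×ₗ ℝ ×ₗ ℕ where
  toFun x := toLex (x.1.re, toLex (x.1.im, x.2))
  map_zero' := rfl
  map_add' _ _ := rfl

theorem lexKey_injective : Function.Injective lexKey := by
  rintro ⟨x, i⟩ ⟨y, j⟩ h
  change toLex (x.re, toLex (x.im, i)) = toLex (y.re, toLex (y.im, j)) at h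
  simp only [toLex_inj, Prod.mk.injEq] at h
  obtain ⟨hre, him, rfl⟩ := h
  rw [Complex.ext hre him]

section

variable {Γ s}

theorem exists_eq_inr_of_mem_support {z : SV Γ s} (hz : IsOddElt Γ s z) {a : Idx Γ s}
    (ha : a ∈ z.support) : ∃ q, a = Sum.inr q := by
  cases a with
  | inl p => exact absurd (hz p) (Finsupp.mem_support_iff.mp ha)
  | inr q => exact ⟨q, rfl⟩

theorem bkt_apply (hs : 2 * s ∈ Γ) (x y : SV Γ s) (t : Idx Γ s) :
    bkt Γ s hs x y t = ∑ a ∈ x.support, ∑ b ∈ y.support, x a * y b * bk Γ s hs a b t := by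
  simp only [bkt, Finsupp.sum, Finsupp.finsetSum_apply, Finsupp.smul_apply, smul_eq_mul]

theorem bk_inr_inr_apply_inl (hs : 2 * s ∈ Γ) (p q : {μ : ℂ // μ - s ∈ Γ} × ℕ) (t : Γ × ℕ) :
    bk Γ s hs (.inr p) (.inr q) (.inl t) =
      if p.1.1 + q.1.1 = t.1 ∧ p.2 + q.2 = t.2 then 2 else 0 := by
  obtain ⟨⟨μ, hμ⟩, i⟩ := p
  obtain ⟨⟨ν, hν⟩, j⟩ := q
  simp [bk, lgen, Finsupp.single_apply, Prod.ext_iff, Subtype.ext_iff]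

def IsLeadingOddIdx (z : SV Γ s) (q₀ : {μ : ℂ // μ - s ∈ Γ} × ℕ) : Prop :=
  Sum.inr q₀ ∈ z.support ∧ ∀ p q, Sum.inr p ∈ z.support → Sum.inr q ∈ z.support →
    p.1.1 + q.1.1 = q₀.1.1 + q₀.1.1 → p.2 + q.2 = q₀.2 + q₀.2 → p = q₀ ∧ q = q₀

theorem exists_isLeadingOddIdx {z : SV Γ s} (hz : IsOddElt Γ s z) (hz0 : z ≠ 0) :
    ∃ q₀, IsLeadingOddIdx z q₀ := by
  obtain ⟨a, ha⟩ := Finsupp.support_nonempty_iff.2 hz0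
  obtain ⟨q, rfl⟩ := exists_eq_inr_of_mem_support hz ha
  set S := z.support.preimage Sum.inr Sum.inr_injective.injOn
  have hκ : Function.Injective fun q : {μ : ℂ // μ - s ∈ Γ} × ℕ => lexKey (q.1.1, q.2) :=
    fun p q h => by
      obtain ⟨hμ, hi⟩ := Prod.ext_iff.1 (lexKey_injective h)
      exact Prod.ext (Subtype.ext hμ) hi
  obtain ⟨q₀, hq₀, htop⟩ :=
    S.exists_mem_forall_add_eq_add_self ⟨q, Finset.mem_preimage.2 ha⟩ hκ.injOn
  refine ⟨q₀, Finset.mem_preimage.1 hq₀, fun p q hp hq hμ hi =>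
    htop p (Finset.mem_preimage.2 hp) q (Finset.mem_preimage.2 hq) ?_⟩
  simp only [← map_add, Prod.mk_add_mk, hμ, hi]

theorem IsLeadingOddIdx.bkt_self_apply (hs : 2 * s ∈ Γ) {z : SV Γ s} (hz : IsOddElt Γ s z)
    {q₀ : {μ : ℂ // μ - s ∈ Γ} × ℕ} (hq₀ : IsLeadingOddIdx z q₀) :
    bkt Γ s hs z z (.inl (⟨q₀.1.1 + q₀.1.1, memGG Γ s hs q₀.1.2 q₀.1.2⟩, q₀.2 + q₀.2)) =
      2 * z (.inr q₀) ^ 2 := by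
  obtain ⟨hmem, huniq⟩ := hq₀
  rw [bkt_apply, Finset.sum_eq_single_of_mem _ hmem, Finset.sum_eq_single_of_mem _ hmem,
    bk_inr_inr_apply_inl, if_pos ⟨rfl, rfl⟩]
  · ring
  · intro b hb hbq₀
    obtain ⟨q, rfl⟩ := exists_eq_inr_of_mem_support hz hb
    rw [bk_inr_inr_apply_inl, if_neg fun h => hbq₀ (congrArg _ (huniq _ _ hmem hb h.1 h.2).2),
      mul_zero]
  · intro a ha haq₀
    obtain ⟨p, rfl⟩ := exists_eq_inr_of_mem_support hz ha
    refine Finset.sum_eq_zero fun b hb => ?_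
    obtain ⟨q, rfl⟩ := exists_eq_inr_of_mem_support hz hb
    rw [bk_inr_inr_apply_inl, if_neg fun h => haq₀ (congrArg _ (huniq _ _ ha hb h.1 h.2).1),
      mul_zero]

end

theorem odd_selfbracket_zero_general (Γ : AddSubgroup ℂ) (s : ℂ) (hs : 2 * s ∈ Γ) :
    ∀ z : SV Γ s, IsOddElt Γ s z → bkt Γ s hs z z = 0 → z = 0 := by
  intro z hz hzz
  by_contra hz0
  obtain ⟨q₀, hq₀⟩ := exists_isLeadingOddIdx hz hz0
  have h := hq₀.bkt_self_apply hs hz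
  rw [hzz, Finsupp.zero_apply, eq_comm] at h
  exact Finsupp.mem_support_iff.1 hq₀.1 (by simpa using h)

/-- If `z` is odd and `[z,z] = 0` then `z = 0`. -/
theorem odd_selfbracket_zero (Γ : AddSubgroup ℂ) (hΓ : ∀ n : ℤ, (n : ℂ) ∈ Γ)
    (s : ℂ) (hs : 2 * s ∈ Γ) :
    ∀ z : SV Γ s, IsOddElt Γ s z → bkt Γ s hs z z = 0 → z = 0 :=
  odd_selfbracket_zero_general Γ s hs

end SVSuper
end
end

section
/- The center of SV = SV[Γ,s] is trivial: if x ∈ SV satisfies [x,y] = 0 for all y ∈ SV, then x = 0. -/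
noncomputable section

namespace SVSuper

variable (Γ : AddSubgroup ℂ) (s : ℂ)

-- auxiliary lemmas to be inserted before center_trivial
section Aux

variable (hs : 2 * s ∈ Γ)

theorem eval_lemma (x : SV Γ s) (β : ℂ) (hβ : β ∈ Γ)
    (hx : bkt Γ s hs x (lgen Γ s β hβ 0) = 0) (c : Idx Γ s) :
    (x.sum fun a ca => ca * (bk Γ s hs a (Sum.inl (⟨β, hβ⟩, 0)) c)) = 0 := by
  have h : bkt Γ s hs x (lgen Γ s β hβ 0) c
      = x.sum fun a ca => ca * (bk Γ s hs a (Sum.inl (⟨β, hβ⟩, 0)) c) := by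
    rw [bkt, Finsupp.sum_apply]
    refine Finsupp.sum_congr fun a _ => ?_
    rw [lgen, Finsupp.sum_apply, Finsupp.sum_single_index (by simp), Finsupp.smul_apply]
    simp [smul_eq_mul]
  rw [← h, hx]; rfl

theorem sum_two_ite (x : SV Γ s) (a₁ a₂ : Idx Γ s) (h12 : a₁ ≠ a₂) (c₁ c₂ : ℂ)
    (f : Idx Γ s → ℂ)
    (hf : ∀ a, f a = (if a = a₁ then c₁ else 0) + (if a = a₂ then c₂ else 0)) :
    (x.sum fun a ca => ca * f a) = x a₁ * c₁ + x a₂ * c₂ := by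
  simp_rw [hf, mul_add]
  rw [Finsupp.sum_add]
  congr 1
  · simp_rw [mul_ite, mul_zero]
    rw [Finsupp.sum_ite_eq']
    split_ifs with h
    · rfl
    · rw [Finsupp.notMem_support_iff.mp h, zero_mul]
  · simp_rw [mul_ite, mul_zero]
    rw [Finsupp.sum_ite_eq']
    split_ifs with h
    · rfl
    · rw [Finsupp.notMem_support_iff.mp h, zero_mul]

theorem bk_eval_L (α β : ℂ) (hα : α ∈ Γ) (hβ : β ∈ Γ) (k : ℕ) (a : Idx Γ s) :
    bk Γ s hs a (Sum.inl (⟨β, hβ⟩, 0)) (Sum.inl (⟨α + β, add_mem hα hβ⟩, k))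
      = (if a = Sum.inl (⟨α, hα⟩, k) then β - α else 0)
        + (if a = Sum.inl (⟨α, hα⟩, k + 1) then -((k : ℂ) + 1) else 0) := by
  rcases a with ⟨⟨α', hα'⟩, i⟩ | ⟨⟨μ, hμ⟩, i⟩
  · rw [bk]
    simp only [lgen, Finsupp.add_apply, Finsupp.smul_apply, Finsupp.single_apply]
    by_cases haa : α' = α
    · subst haa
      simp only [Sum.inl.injEq, Prod.mk.injEq, Subtype.mk.injEq, true_and]
      rcases eq_or_ne i k with rfl | hik
      · rcases Nat.eq_zero_or_pos i with rfl | hi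
        · norm_num
        · have h1 : i - 1 ≠ i := by omega
          have h2 : i ≠ i + 1 := by omega
          simp [h1, h2]
      · rcases eq_or_ne i (k + 1) with rfl | hik2
        · have h1 : k + 1 - 1 = k := by omega
          have h2 : k + 1 ≠ k := by omega
          simp only [add_zero, h1, h2, if_false, if_true, if_pos rfl, mul_zero, zero_add,
            mul_one, smul_eq_mul]
          push_cast; ring
        · rcases Nat.eq_zero_or_pos i with rfl | hi
          · simp [hik, hik2]
          · have h2 : i - 1 ≠ k := by omega
            simp [hik, hik2, h2]
    · have h1 : α' + β ≠ α + β := fun h => haa (add_right_cancel h)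
      simp [h1, haa]
  · rw [bk]
    simp [lgen, ggen, Finsupp.single_apply]

theorem bk_eval_G (μ β : ℂ) (hμ : μ - s ∈ Γ) (hβ : β ∈ Γ) (k : ℕ) (a : Idx Γ s) :
    bk Γ s hs a (Sum.inl (⟨β, hβ⟩, 0)) (Sum.inr (⟨β + μ, memLG Γ s hβ hμ⟩, k))
      = (if a = Sum.inr (⟨μ, hμ⟩, k) then -(μ - β / 2) else 0)
        + (if a = Sum.inr (⟨μ, hμ⟩, k + 1) then -((k : ℂ) + 1) else 0) := by
  rcases a with ⟨⟨α', hα'⟩, i⟩ | ⟨⟨μ', hμ'⟩, i⟩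
  · rw [bk]
    simp [lgen, ggen, Finsupp.single_apply]
  · rw [bk]
    simp only [ggen, Finsupp.neg_apply, Finsupp.add_apply, Finsupp.smul_apply,
      Finsupp.single_apply, neg_add]
    by_cases hmm : μ' = μ
    · subst hmm
      simp only [Sum.inr.injEq, Prod.mk.injEq, Subtype.mk.injEq, true_and]
      rcases eq_or_ne i k with rfl | hik
      · rcases Nat.eq_zero_or_pos i with rfl | hi
        · norm_num
        · have h1 : i - 1 ≠ i := by omega
          have h2 : i ≠ i + 1 := by omega
          simp [h1, h2]
      · rcases eq_or_ne i (k + 1) with rfl | hik2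
        · have h1 : k + 1 - 1 = k := by omega
          have h2 : k + 1 ≠ k := by omega
          simp only [zero_add, h1, h2, if_false, if_true, if_pos rfl, mul_zero, zero_add,
            mul_one, smul_eq_mul]
          push_cast; ring
        · rcases Nat.eq_zero_or_pos i with rfl | hi
          · simp [hik, hik2]
          · have h2 : i - 1 ≠ k := by omega
            simp [hik, hik2, h2]
    · have h1 : β + μ' ≠ β + μ := fun h => hmm (add_left_cancel h)
      simp [h1, hmm]

theorem eqn_L (x : SV Γ s) (hx : ∀ y, bkt Γ s hs x y = 0)
    (α β : ℂ) (hα : α ∈ Γ) (hβ : β ∈ Γ) (k : ℕ) :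
    x (Sum.inl (⟨α, hα⟩, k)) * (β - α)
      + x (Sum.inl (⟨α, hα⟩, k + 1)) * (-((k : ℂ) + 1)) = 0 := by
  have h := eval_lemma Γ s hs x β hβ (hx _) (Sum.inl (⟨α + β, add_mem hα hβ⟩, k))
  rw [sum_two_ite Γ s x (Sum.inl (⟨α, hα⟩, k)) (Sum.inl (⟨α, hα⟩, k + 1))
    (by simp) (β - α) (-((k : ℂ) + 1)) _ (bk_eval_L Γ s hs α β hα hβ k)] at h
  exact h

theorem eqn_G (x : SV Γ s) (hx : ∀ y, bkt Γ s hs x y = 0)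
    (μ β : ℂ) (hμ : μ - s ∈ Γ) (hβ : β ∈ Γ) (k : ℕ) :
    x (Sum.inr (⟨μ, hμ⟩, k)) * (-(μ - β / 2))
      + x (Sum.inr (⟨μ, hμ⟩, k + 1)) * (-((k : ℂ) + 1)) = 0 := by
  have h := eval_lemma Γ s hs x β hβ (hx _) (Sum.inr (⟨β + μ, memLG Γ s hβ hμ⟩, k))
  rw [sum_two_ite Γ s x (Sum.inr (⟨μ, hμ⟩, k)) (Sum.inr (⟨μ, hμ⟩, k + 1))
    (by simp) (-(μ - β / 2)) (-((k : ℂ) + 1)) _ (bk_eval_G Γ s hs μ β hμ hβ k)] at h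
  exact h

end Aux

/-- The center of `SV[Γ,s]` is trivial. -/
theorem center_trivial (Γ : AddSubgroup ℂ) (hΓ : ∀ n : ℤ, (n : ℂ) ∈ Γ)
    (s : ℂ) (hs : 2 * s ∈ Γ) :
    ∀ x : SV Γ s, (∀ y : SV Γ s, bkt Γ s hs x y = 0) → x = 0 := by
  intro x hx
  have hk1 : ∀ k : ℕ, -((k : ℂ) + 1) ≠ 0 := by
    intro k
    exact neg_ne_zero.mpr (Nat.cast_add_one_ne_zero (R := ℂ) k)
  have hLsucc : ∀ (α : ℂ) (hα : α ∈ Γ) (k : ℕ), x (Sum.inl (⟨α, hα⟩, k + 1)) = 0 := by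
    intro α hα k
    have h := eqn_L Γ s hs x hx α α hα hα k
    rw [sub_self, mul_zero, zero_add] at h
    exact (mul_eq_zero.mp h).resolve_right (hk1 k)
  have hL : ∀ (α : ℂ) (hα : α ∈ Γ) (k : ℕ), x (Sum.inl (⟨α, hα⟩, k)) = 0 := by
    intro α hα k
    have h1 : (α + 1) ∈ Γ := by
      have := hΓ 1; push_cast at this; exact add_mem hα this
    have h := eqn_L Γ s hs x hx α (α + 1) hα h1 k
    rw [hLsucc α hα k, zero_mul, add_zero] at h
    have h2 : α + 1 - α = 1 := by ring
    rw [h2, mul_one] at h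
    exact h
  have hGsucc : ∀ (μ : ℂ) (hμ : μ - s ∈ Γ) (k : ℕ), x (Sum.inr (⟨μ, hμ⟩, k + 1)) = 0 := by
    intro μ hμ k
    have hb : (2 * μ) ∈ Γ := by
      have h2 : 2 * μ = (μ - s) + (μ - s) + 2 * s := by ring
      rw [h2]; exact add_mem (add_mem hμ hμ) hs
    have h := eqn_G Γ s hs x hx μ (2 * μ) hμ hb k
    have h0 : -(μ - 2 * μ / 2) = 0 := by ring
    rw [h0, mul_zero, zero_add] at h
    exact (mul_eq_zero.mp h).resolve_right (hk1 k)
  have hG : ∀ (μ : ℂ) (hμ : μ - s ∈ Γ) (k : ℕ), x (Sum.inr (⟨μ, hμ⟩, k)) = 0 := by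
    intro μ hμ k
    have hb : (2 * μ + 2) ∈ Γ := by
      have h2 : 2 * μ = (μ - s) + (μ - s) + 2 * s := by ring
      have h3 := hΓ 2; push_cast at h3
      exact add_mem (h2 ▸ add_mem (add_mem hμ hμ) hs) h3
    have h := eqn_G Γ s hs x hx μ (2 * μ + 2) hμ hb k
    have h0 : -(μ - (2 * μ + 2) / 2) = 1 := by ring
    rw [h0, mul_one, hGsucc μ hμ k, zero_mul, add_zero] at h
    exact h
  ext a
  rcases a with ⟨⟨α, hα⟩, k⟩ | ⟨⟨μ, hμ⟩, k⟩
  · simpa using hL α hα k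
  · simpa using hG μ hμ k

end SVSuper
end
end

section
/- SV = SV[Γ,s] is generated as a Lie superalgebra by the set {L_{α,0} : α ∈ Γ} ∪ {L_{0,1}} ∪ {G_{μ,0} : μ ∈ s+Γ}: the smallest ℂ-subspace of SV containing this set and closed under the bracket is SV itself. -/
noncomputable section

namespace SVSuper

variable (Γ : AddSubgroup ℂ) (s : ℂ)

/-! Bracketing with `L_{0,1}` raises the level `i` of `L_{α,i}` and `G_{μ,i}` up to a
multiple of the same vector at level `i`, with coefficient `α` resp. `μ`. In degree `0`
this coefficient vanishes, and one brackets `L_{γ,1}` (any `γ ≠ 0` in `Γ`) with `L_{-γ,i}`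
resp. `G_{-γ,i}` instead. -/

section Generation

variable {Γ s}

theorem mem_of_forall_single_mem {R ι : Type*} [Semiring R] {p : Submodule R (ι →₀ R)}
    (h : ∀ a, Finsupp.single a 1 ∈ p) (x : ι →₀ R) : x ∈ p := by
  have hspan : Submodule.span R (Set.range fun a => Finsupp.single a (1 : R)) ≤ p :=
    Submodule.span_le.2 (Set.range_subset_iff.2 h)
  rw [← Finsupp.coe_basisSingleOne, Module.Basis.span_eq] at hspan
  exact hspan Submodule.mem_top

theorem _root_.Submodule.mem_of_smul_add_smul_mem {K M : Type*} [DivisionRing K]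
    [AddCommGroup M] [Module K M] {p : Submodule K M} {v w : M} {a c : K} (ha : a ≠ 0)
    (h : a • v + c • w ∈ p) (hw : w ∈ p) : v ∈ p :=
  (p.smul_mem_iff ha).1 ((p.add_mem_iff_left (p.smul_mem c hw)).1 h)

theorem bkt_single (hs : 2 * s ∈ Γ) (a b : Idx Γ s) :
    bkt Γ s hs (Finsupp.single a 1) (Finsupp.single b 1) = bk Γ s hs a b := by
  rw [bkt, Finsupp.sum_single_index, Finsupp.sum_single_index] <;> simp

theorem bkt_lgen_lgen (hs : 2 * s ∈ Γ) {α β : ℂ} (hα : α ∈ Γ) (hβ : β ∈ Γ) (i j : ℕ) :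
    bkt Γ s hs (lgen Γ s α hα i) (lgen Γ s β hβ j)
      = (β - α) • lgen Γ s (α + β) (add_mem hα hβ) (i + j)
        + ((j : ℂ) - (i : ℂ)) • lgen Γ s (α + β) (add_mem hα hβ) (i + j - 1) :=
  bkt_single hs _ _

theorem bkt_lgen_ggen (hs : 2 * s ∈ Γ) {α μ : ℂ} (hα : α ∈ Γ) (hμ : μ - s ∈ Γ) (i j : ℕ) :
    bkt Γ s hs (lgen Γ s α hα i) (ggen Γ s μ hμ j)
      = (μ - α / 2) • ggen Γ s (α + μ) (memLG Γ s hα hμ) (i + j)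
        + ((j : ℂ) - (i : ℂ) / 2) • ggen Γ s (α + μ) (memLG Γ s hα hμ) (i + j - 1) :=
  bkt_single hs _ _

variable {hs : 2 * s ∈ Γ} {p : Submodule ℂ (SV Γ s)}

/-- `[L_{γ,1}, L_{α,i}] = (α - γ) L_{γ+α,i+1} + (i - 1) L_{γ+α,i}`. -/
theorem lgen_succ_mem (hp : ∀ x y, x ∈ p → y ∈ p → bkt Γ s hs x y ∈ p)
    {γ α δ : ℂ} (hγ : γ ∈ Γ) (hα : α ∈ Γ) (hδ : δ ∈ Γ) (hsum : γ + α = δ)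
    (hne : α ≠ γ) {i : ℕ} (hγ1 : lgen Γ s γ hγ 1 ∈ p) (hαi : lgen Γ s α hα i ∈ p)
    (hδi : lgen Γ s δ hδ i ∈ p) : lgen Γ s δ hδ (i + 1) ∈ p := by
  subst hsum
  have h := hp _ _ hγ1 hαi
  rw [bkt_lgen_lgen, add_comm 1 i, Nat.add_sub_cancel] at h
  exact p.mem_of_smul_add_smul_mem (sub_ne_zero.2 hne) h hδi

/-- `[L_{γ,1}, G_{μ,i}] = (μ - γ/2) G_{γ+μ,i+1} + (i - 1/2) G_{γ+μ,i}`. -/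
theorem ggen_succ_mem (hp : ∀ x y, x ∈ p → y ∈ p → bkt Γ s hs x y ∈ p)
    {γ μ δ : ℂ} (hγ : γ ∈ Γ) (hμ : μ - s ∈ Γ) (hδ : δ - s ∈ Γ)
    (hsum : γ + μ = δ) (hne : μ ≠ γ / 2) {i : ℕ} (hγ1 : lgen Γ s γ hγ 1 ∈ p)
    (hμi : ggen Γ s μ hμ i ∈ p) (hδi : ggen Γ s δ hδ i ∈ p) : ggen Γ s δ hδ (i + 1) ∈ p := by
  subst hsum
  have h := hp _ _ hγ1 hμi
  rw [bkt_lgen_ggen, add_comm 1 i, Nat.add_sub_cancel] at h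
  exact p.mem_of_smul_add_smul_mem (sub_ne_zero.2 hne) h hδi

theorem lgen_mem_of_ne_zero (hp : ∀ x y, x ∈ p → y ∈ p → bkt Γ s hs x y ∈ p)
    (hL0 : ∀ (α : ℂ) (hα : α ∈ Γ), lgen Γ s α hα 0 ∈ p) (hL01 : lgen Γ s 0 (zero_mem Γ) 1 ∈ p)
    (i : ℕ) {α : ℂ} (hα : α ∈ Γ) (hα0 : α ≠ 0) :
    lgen Γ s α hα i ∈ p := by
  induction i with
  | zero => exact hL0 α hα
  | succ i ih => exact lgen_succ_mem hp (zero_mem Γ) hα hα (zero_add α) hα0 hL01 ih ih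

theorem lgen_mem (hp : ∀ x y, x ∈ p → y ∈ p → bkt Γ s hs x y ∈ p)
    (hL0 : ∀ (α : ℂ) (hα : α ∈ Γ), lgen Γ s α hα 0 ∈ p) (hL01 : lgen Γ s 0 (zero_mem Γ) 1 ∈ p)
    {γ : ℂ} (hγ : γ ∈ Γ) (hγ0 : γ ≠ 0) (i : ℕ) {α : ℂ} (hα : α ∈ Γ) :
    lgen Γ s α hα i ∈ p := by
  obtain rfl | hα0 := eq_or_ne α 0
  · induction i with
    | zero => exact hL0 0 hα
    | succ i ih =>
      refine lgen_succ_mem hp hγ (neg_mem hγ) hα (add_neg_cancel γ) ?_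
        (lgen_mem_of_ne_zero hp hL0 hL01 1 hγ hγ0)
        (lgen_mem_of_ne_zero hp hL0 hL01 i _ (neg_ne_zero.2 hγ0)) ih
      exact fun h => hγ0 (by linear_combination -h / 2)
  · exact lgen_mem_of_ne_zero hp hL0 hL01 i hα hα0

theorem ggen_mem_of_ne_zero (hp : ∀ x y, x ∈ p → y ∈ p → bkt Γ s hs x y ∈ p)
    (hL01 : lgen Γ s 0 (zero_mem Γ) 1 ∈ p) (hG0 : ∀ (μ : ℂ) (hμ : μ - s ∈ Γ), ggen Γ s μ hμ 0 ∈ p)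
    (i : ℕ) {μ : ℂ} (hμ : μ - s ∈ Γ) (hμ0 : μ ≠ 0) :
    ggen Γ s μ hμ i ∈ p := by
  induction i with
  | zero => exact hG0 μ hμ
  | succ i ih =>
    exact ggen_succ_mem hp (zero_mem Γ) hμ hμ (zero_add μ) (by simpa using hμ0) hL01 ih ih

theorem ggen_mem (hp : ∀ x y, x ∈ p → y ∈ p → bkt Γ s hs x y ∈ p)
    (hL0 : ∀ (α : ℂ) (hα : α ∈ Γ), lgen Γ s α hα 0 ∈ p) (hL01 : lgen Γ s 0 (zero_mem Γ) 1 ∈ p)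
    (hG0 : ∀ (μ : ℂ) (hμ : μ - s ∈ Γ), ggen Γ s μ hμ 0 ∈ p)
    {γ : ℂ} (hγ : γ ∈ Γ) (hγ0 : γ ≠ 0) (i : ℕ) {μ : ℂ} (hμ : μ - s ∈ Γ) :
    ggen Γ s μ hμ i ∈ p := by
  obtain rfl | hμ0 := eq_or_ne μ 0
  · have hμγ : -γ - s ∈ Γ := by simpa [sub_eq_add_neg] using add_mem (neg_mem hγ) hμ
    induction i with
    | zero => exact hG0 0 hμ
    | succ i ih =>
      refine ggen_succ_mem hp hγ hμγ hμ (add_neg_cancel γ) ?_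
        (lgen_mem_of_ne_zero hp hL0 hL01 1 hγ hγ0)
        (ggen_mem_of_ne_zero hp hL01 hG0 i hμγ (neg_ne_zero.2 hγ0)) ih
      exact fun h => hγ0 (by linear_combination -2 * h / 3)
  · exact ggen_mem_of_ne_zero hp hL01 hG0 i hμ hμ0

end Generation

/-- `SV[Γ,s]` is generated by `{L_{α,0}} ∪ {L_{0,1}} ∪ {G_{μ,0}}`: any subspace
containing these elements and closed under the bracket is all of `SV`. -/
theorem SV_generated (Γ : AddSubgroup ℂ) (hΓ : ∀ n : ℤ, (n : ℂ) ∈ Γ)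
    (s : ℂ) (hs : 2 * s ∈ Γ) :
    ∀ p : Submodule ℂ (SV Γ s),
      (∀ (α : ℂ) (hα : α ∈ Γ), lgen Γ s α hα 0 ∈ p) →
      lgen Γ s 0 (zero_mem Γ) 1 ∈ p →
      (∀ (μ : ℂ) (hμ : μ - s ∈ Γ), ggen Γ s μ hμ 0 ∈ p) →
      (∀ x y : SV Γ s, x ∈ p → y ∈ p → bkt Γ s hs x y ∈ p) →
      ∀ x : SV Γ s, x ∈ p := by
  intro p hL0 hL01 hG0 hp
  have h1 : (1 : ℂ) ∈ Γ := by exact_mod_cast hΓ 1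
  refine mem_of_forall_single_mem ?_
  rintro (⟨⟨α, hα⟩, i⟩ | ⟨⟨μ, hμ⟩, i⟩)
  · exact lgen_mem hp hL0 hL01 h1 one_ne_zero i hα
  · exact ggen_mem hp hL0 hL01 hG0 h1 one_ne_zero i hμ

end SVSuper
end
end
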